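/- arXiv:2205.12094 — 2 statements merged into one kernel-verified Lean document; each statement's English description precedes it below -/
import Mathlib

section
/- Let G be a cyclic group of order q with generator g. Suppose n voters each hold a secret key sK_i ∈ ℤ and a vote v_i ∈ ℤ, and each picks a randomizer r_i ∈ ℤ. Define pK = ∏_{i=1}^n g^{sK_i}, X_i = g^{r_i}, Y_i = pK^{r_i} · g^{v_i}, X_R = ∏_{i=1}^n X_i, Y_R = ∏_{i=1}^n Y_i, and W = ∏_{i=1}^n X_R^{sK_i}. Then Y_R / W = g^{∑_{i=1}^n v_i}. -/
private lemma prod_zpow_eq {G : Type*} [CommGroup G] (g : G) {ι : Type*} (s : Finset ι)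
    (f : ι → ℤ) : ∏ i ∈ s, g ^ f i = g ^ ∑ i ∈ s, f i := by
  induction s using Finset.cons_induction with
  | empty => simp
  | cons a s ha ih => simp [Finset.prod_cons, Finset.sum_cons, ih, zpow_add]

theorem hev_correctness {G : Type*} [CommGroup G] (g : G) (n : ℕ)
    (sK r v : Fin n → ℤ) (pK : G) (hpK : pK = ∏ i, g ^ sK i)
    (X Y : Fin n → G) (hX : ∀ i, X i = g ^ r i)
    (hY : ∀ i, Y i = pK ^ r i * g ^ v i)
    (XR YR W : G) (hXR : XR = ∏ i, X i) (hYR : YR = ∏ i, Y i)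
    (hW : W = ∏ i, XR ^ sK i) :
    YR / W = g ^ (∑ i, v i) := by
  have hpK' : pK = g ^ (∑ i, sK i) := by rw [hpK, prod_zpow_eq]
  have hXR' : XR = g ^ (∑ i, r i) := by
    rw [hXR, Finset.prod_congr rfl fun i _ => hX i, prod_zpow_eq]
  have hYR' : YR = g ^ ((∑ i, sK i) * (∑ i, r i) + ∑ i, v i) := by
    rw [hYR, Finset.prod_congr rfl fun i _ => hY i, Finset.prod_mul_distrib, hpK',
      prod_zpow_eq]
    simp only [← zpow_mul]
    rw [prod_zpow_eq, ← zpow_add]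
  have hW' : W = g ^ ((∑ i, sK i) * (∑ i, r i)) := by
    rw [hW, hXR']
    simp only [← zpow_mul]
    rw [prod_zpow_eq, ← Finset.mul_sum, mul_comm]
  rw [hYR', hW', div_eq_iff_eq_mul, ← zpow_add, add_comm]
end

section
/- Let G be a commutative group and let pK_i = g^{sK_i} for i = 1,...,n, and let S ⊆ {1,...,n} be any subset. Define the partial public key pK_S = ∏_{i ∈ S} pK_i and for votes v_i and randomizers r_i define X_i = g^{r_i}, Y_i = pK_S^{r_i} · g^{v_i}. Then with X_R = ∏_i X_i, Y_R = ∏_i Y_i, and W = ∏_{i ∈ S} X_R^{sK_i}, one has Y_R / W = g^{∑_{i=1}^n v_i}. -/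
lemma zpow_finset_sum {G : Type*} [CommGroup G] (g : G) {α : Type*} (s : Finset α)
    (f : α → ℤ) : g ^ (∑ i ∈ s, f i) = ∏ i ∈ s, g ^ f i := by
  induction s using Finset.cons_induction with
  | empty => simp
  | cons a s ha ih => rw [Finset.sum_cons, Finset.prod_cons, zpow_add, ih]

theorem hev_partial_key_correctness {G : Type*} [CommGroup G] (g : G) (n : ℕ)
    (sK r v : Fin n → ℤ) (S : Finset (Fin n)) (pKS : G)
    (hpKS : pKS = ∏ i ∈ S, g ^ sK i)
    (X Y : Fin n → G) (hX : ∀ i, X i = g ^ r i)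
    (hY : ∀ i, Y i = pKS ^ r i * g ^ v i)
    (XR YR W : G) (hXR : XR = ∏ i, X i) (hYR : YR = ∏ i, Y i)
    (hW : W = ∏ i ∈ S, XR ^ sK i) :
    YR / W = g ^ (∑ i, v i) := by
  subst hpKS hXR hYR hW
  simp only [hX, hY, Finset.prod_mul_distrib, ← zpow_finset_sum, ← zpow_mul,
    Finset.sum_mul, Finset.mul_sum]
  rw [div_eq_iff_eq_mul, mul_comm]
  congr 2
  rw [Finset.sum_comm]; simp [mul_comm]
end
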